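/- Let n ≥ 1, let A ∈ ℝ^{n×n} be Metzler and Hurwitz stable, let b₀ ∈ ℝⁿ with b₀ ≥ 0 entrywise, and let μ, θ > 0 with r := μ/θ. Define g₀ := −eₙᵀA⁻¹b₀ and g_n := −eₙᵀA⁻¹eₙ, and assume r < g₀. Set u* := (g₀ − r)/(g_n r) and Ā := A − u* eₙeₙᵀ. Then for all η > 0 and all k_p > 0, the (n+2)×(n+2) matrix [[Ā, 0, −k_p r eₙ], [0, −η u*, −μ k_p/u*], [eₙᵀ, −η u*, −μ k_p/u*]] is Hurwitz stable. -/

import Mathlib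

open Matrix

/-- A real square matrix is Metzler if all its off-diagonal entries are nonnegative. -/
def Metzler {m : Type*} [Fintype m] (M : Matrix m m ℝ) : Prop :=
  ∀ i j, i ≠ j → 0 ≤ M i j

/-- A real square matrix is Hurwitz stable if all its (complex) eigenvalues have
negative real part. -/
def HurwitzStable {m : Type*} [Fintype m] [DecidableEq m] (M : Matrix m m ℝ) : Prop :=
  ∀ z ∈ spectrum ℂ (M.map Complex.ofReal), z.re < 0

/-!
A Metzler Hurwitz matrix `A` has an entrywise nonpositive inverse: for large `s` the matrix
`Q = 1 + A / s` is nonnegative with spectrum in the open unit disc, so `Qᵏ → 0` and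
`-s A⁻¹ = (1 - Q)⁻¹ = ∑ Qᵏ ≥ 0`; its diagonal is even negative, as `(A A⁻¹)ᵢᵢ = 1`. Hence
`gₙ > 0`, so `u* > 0`, and `v = -A⁻¹ 𝟙 > 0` satisfies `Ā v ≤ A v < 0`.

Let `(x, ζ)` be an eigenvector of the Jacobian for an eigenvalue `z` with `Re z ≥ 0`. The two
controller rows give `c · Re (x̄ₙ ζ₁) = c Re z |ζ₁|² + Re (z̄ (z + b)) |ζ₀|² ≥ 0`. At an index `i`
maximising `|xᵢ| / vᵢ`, the Metzler structure and `Ā v < 0` give `Re (x̄ᵢ (Ā x)ᵢ) < 0` unless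
`x = 0`, whereas the first block row gives `Re (x̄ᵢ (Ā x)ᵢ) = Re z |xᵢ|² + a δᵢₙ Re (x̄ₙ ζ₁) ≥ 0`.
So `x = 0`, and then the remaining rows force `ζ = 0`.
-/

open Filter Topology ComplexConjugate

theorem tendsto_pow_nhds_zero_of_spectralRadius_lt_one {A : Type*} [NormedRing A]
    [NormedAlgebra ℂ A] [CompleteSpace A] {a : A} (ha : spectralRadius ℂ a < 1) :
    Tendsto (a ^ ·) atTop (𝓝 0) := by
  obtain ⟨ρ, hρa, hρ1⟩ := ENNReal.lt_iff_exists_nnreal_btwn.mp ha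
  have hev : ∀ᶠ k : ℕ in atTop, (‖a ^ k‖₊ : ENNReal) ^ (1 / k : ℝ) < ρ :=
    (spectrum.pow_nnnorm_pow_one_div_tendsto_nhds_spectralRadius a).eventually_lt_const hρa
  refine squeeze_zero_norm' ?_ (tendsto_pow_atTop_nhds_zero_of_lt_one ρ.2
    (by exact_mod_cast hρ1))
  filter_upwards [hev, eventually_ge_atTop 1] with k hk hk1
  have hk0 : (k : ℝ) ≠ 0 := by positivity
  have := ENNReal.rpow_lt_rpow hk (by positivity : (0 : ℝ) < k)
  rw [← ENNReal.rpow_mul, one_div_mul_cancel hk0, ENNReal.rpow_one, ENNReal.rpow_natCast] at this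
  exact_mod_cast this.le

theorem spectrum.exists_eq_one_add_div_of_mem {A : Type*} [Ring A] [Algebra ℂ A] {a : A}
    {c z : ℂ} (hc : c ≠ 0) (hz : z ∈ spectrum ℂ (1 + c⁻¹ • a)) :
    ∃ w ∈ spectrum ℂ a, z = 1 + w / c := by
  refine ⟨c * (z - 1), ?_, by field_simp; ring⟩
  rw [← spectrum.smul_mem_smul_iff (r := (Units.mk0 c hc)⁻¹), ← spectrum.add_mem_add_iff (s := 1)]
  have hcz : c⁻¹ * (c * (z - 1)) + 1 = z := by field_simp; ring
  simpa [Units.smul_def, hcz] using hz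

theorem Complex.norm_one_add_div_lt_one {w : ℂ} {s : ℝ} (hs : 0 < s)
    (hw : ‖w‖ ^ 2 < -2 * w.re * s) : ‖1 + w / s‖ < 1 := by
  have hsw : ‖(s : ℂ) + w‖ ^ 2 < s ^ 2 := by
    rw [← Complex.normSq_eq_norm_sq, Complex.normSq_apply] at *
    simp only [Complex.add_re, Complex.ofReal_re, Complex.add_im, Complex.ofReal_im, zero_add]
    nlinarith
  have hs' : (s : ℂ) ≠ 0 := by exact_mod_cast hs.ne'
  rw [show 1 + w / s = (s + w) / s by field_simp, norm_div, Complex.norm_real,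
    Real.norm_of_nonneg hs.le, div_lt_one hs]
  exact (pow_lt_pow_iff_left₀ (norm_nonneg _) hs.le two_ne_zero).mp hsw

theorem re_conj_mul_nonneg_of_antithetic_rows {z ζ₀ ζ₁ y : ℂ} {b c : ℝ} (hz : 0 ≤ z.re)
    (hb : 0 ≤ b) (hc : 0 < c) (h₀ : -b * ζ₀ - c * ζ₁ = z * ζ₀)
    (h₁ : y - b * ζ₀ - c * ζ₁ = z * ζ₁) : 0 ≤ (conj y * ζ₁).re := by
  have hy : y = z * ζ₁ - z * ζ₀ := by linear_combination h₁ - h₀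
  have key : (c : ℂ) * (conj y * ζ₁)
      = c * conj z * (conj ζ₁ * ζ₁) + conj z * (z + b) * (conj ζ₀ * ζ₀) := by
    rw [hy, map_sub, map_mul, map_mul]
    linear_combination (conj z * conj ζ₀) * h₀
  refine (mul_nonneg_iff_of_pos_left hc).mp ?_
  rw [← Complex.re_ofReal_mul, key, ← Complex.normSq_eq_conj_mul_self,
    ← Complex.normSq_eq_conj_mul_self]
  simp only [Complex.add_re, Complex.re_mul_ofReal, Complex.re_ofReal_mul, Complex.conj_re]
  have hzb : 0 ≤ (conj z * (z + b)).re := by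
    simp only [Complex.mul_re, Complex.conj_re, Complex.conj_im, Complex.add_re, Complex.add_im,
      Complex.ofReal_re, Complex.ofReal_im]
    nlinarith [sq_nonneg z.im]
  exact add_nonneg (mul_nonneg (mul_nonneg hc.le hz) (Complex.normSq_nonneg _))
    (mul_nonneg hzb (Complex.normSq_nonneg _))

section

variable {m : Type*} [Fintype m] [DecidableEq m]

section

attribute [local instance] Matrix.linftyOpNormedRing Matrix.linftyOpNormedAlgebra

theorem Matrix.tendsto_pow_nhds_zero_of_spectrum [Nonempty m] {M : Matrix m m ℂ}
    (hM : ∀ z ∈ spectrum ℂ M, ‖z‖ < 1) : Tendsto (M ^ ·) atTop (𝓝 0) := by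
  refine tendsto_pow_nhds_zero_of_spectralRadius_lt_one ?_
  simpa using spectrum.spectralRadius_lt_of_forall_lt M (r := 1) fun z hz => by
    exact_mod_cast hM z hz

end

theorem Matrix.isUnit_one_sub_of_tendsto_pow {R : Type*} [Field R] [TopologicalSpace R]
    [IsTopologicalRing R] [T2Space R] {Q : Matrix m m R}
    (hQ : Tendsto (Q ^ ·) atTop (𝓝 0)) : IsUnit (1 - Q) := by
  have hdet : Tendsto (fun k => ((1 - Q) * ∑ i ∈ Finset.range k, Q ^ i).det) atTop (𝓝 1) := by
    simp_rw [mul_neg_geom_sum]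
    have h := (tendsto_const_nhds (x := (1 : Matrix m m R))).sub hQ
    rw [sub_zero] at h
    have h₂ := ((continuous_id.matrix_det (R := R)).tendsto 1).comp h
    simp only [Function.comp_def, id, det_one] at h₂
    exact h₂
  rw [isUnit_iff_isUnit_det, isUnit_iff_ne_zero]
  intro h
  simp only [det_mul, h, zero_mul] at hdet
  exact zero_ne_one (tendsto_nhds_unique tendsto_const_nhds hdet)

theorem Matrix.inv_one_sub_nonneg {Q : Matrix m m ℝ} (hQ₀ : ∀ i j, 0 ≤ Q i j)
    (hQ : Tendsto (Q ^ ·) atTop (𝓝 0)) (i j : m) : 0 ≤ (1 - Q)⁻¹ i j := by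
  set T := (1 - Q)⁻¹
  have hT : T * (1 - Q) = 1 :=
    nonsing_inv_mul _ ((isUnit_iff_isUnit_det _).mp (isUnit_one_sub_of_tendsto_pow hQ))
  have hsplit : ∀ k, T = ∑ l ∈ Finset.range k, Q ^ l + T * Q ^ k := fun k => by
    rw [← sub_eq_iff_eq_add, ← mul_one_sub, ← mul_neg_geom_sum, ← Matrix.mul_assoc, hT,
      Matrix.one_mul]
  have hlim : Tendsto (fun k => (T * Q ^ k) i j) atTop (𝓝 0) := by
    have := (tendsto_const_nhds (x := T)).mul hQ
    rw [mul_zero] at this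
    exact tendsto_pi_nhds.mp (tendsto_pi_nhds.mp this i) j
  refine le_of_tendsto' hlim fun k => ?_
  conv_rhs => rw [hsplit k]
  rw [add_apply, Matrix.sum_apply, le_add_iff_nonneg_left]
  exact Finset.sum_nonneg fun l _ => pow_apply_nonneg hQ₀ l i j

theorem Matrix.exists_mulVec_eq_smul_of_mem_spectrum {K : Type*} [Field K] {M : Matrix m m K}
    {z : K} (hz : z ∈ spectrum K M) : ∃ v ≠ 0, M *ᵥ v = z • v := by
  rw [← Matrix.spectrum_toLin', ← Module.End.hasEigenvalue_iff_mem_spectrum] at hz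
  obtain ⟨v, hv⟩ := hz.exists_hasEigenvector
  exact ⟨v, hv.2, by simpa using hv.apply_eq_smul⟩

theorem HurwitzStable.isUnit_det {A : Matrix m m ℝ} (hH : HurwitzStable A) : IsUnit A.det := by
  have h0 : (0 : ℂ) ∉ spectrum ℂ (A.map Complex.ofReal) := fun h => (hH 0 h).false
  rw [spectrum.zero_notMem_iff, isUnit_iff_isUnit_det] at h0
  refine isUnit_iff_ne_zero.mpr fun h => h0.ne_zero ?_
  rw [show A.map Complex.ofReal = Complex.ofRealHom.mapMatrix A from rfl, ← RingHom.map_det, h,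
    map_zero]

theorem Metzler.one_add_inv_smul_nonneg {A : Matrix m m ℝ} (hM : Metzler A) {s : ℝ}
    (hs : 0 < s) (hA : ∀ i, -A i i ≤ s) (i j : m) : 0 ≤ (1 + s⁻¹ • A) i j := by
  rcases eq_or_ne i j with rfl | hij
  · have : 0 ≤ 1 + s⁻¹ * A i i := by
      rw [← inv_mul_cancel₀ hs.ne', ← mul_add]
      exact mul_nonneg (inv_nonneg.mpr hs.le) (by linarith [hA i])
    simpa using this
  · simpa [one_apply_ne hij] using mul_nonneg (inv_nonneg.mpr hs.le) (hM i j hij)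

theorem Matrix.tendsto_pow_one_add_inv_smul [Nonempty m] {A : Matrix m m ℝ} {s : ℝ} (hs : 0 < s)
    (hA : ∀ w ∈ spectrum ℂ (A.map Complex.ofReal), ‖w‖ ^ 2 < -2 * w.re * s) :
    Tendsto ((1 + s⁻¹ • A) ^ ·) atTop (𝓝 0) := by
  set Q := 1 + s⁻¹ • A
  have hQ : Tendsto ((Q.map Complex.ofReal) ^ ·) atTop (𝓝 0) := by
    refine Matrix.tendsto_pow_nhds_zero_of_spectrum fun z hz => ?_
    have hQmap : Q.map Complex.ofReal = 1 + (s : ℂ)⁻¹ • A.map Complex.ofReal := by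
      ext i j; simp [Q, one_apply, apply_ite Complex.ofReal]
    rw [hQmap] at hz
    obtain ⟨w, hw, rfl⟩ := spectrum.exists_eq_one_add_div_of_mem (by exact_mod_cast hs.ne') hz
    exact Complex.norm_one_add_div_lt_one hs (hA w hw)
  have hpow : ∀ k, ((Q.map Complex.ofReal) ^ k).map Complex.re = Q ^ k := fun k => by
    rw [show Q.map Complex.ofReal = Q.map Complex.ofRealHom from rfl, ← Matrix.map_pow]
    ext; simp
  simpa [Function.comp_def, hpow] using
    ((continuous_id.matrix_map Complex.continuous_re).tendsto 0).comp hQ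

theorem Metzler.inv_nonpos [Nonempty m] {A : Matrix m m ℝ} (hM : Metzler A)
    (hH : HurwitzStable A) (i j : m) : A⁻¹ i j ≤ 0 := by
  -- `s` exceeds every `-Aᵢᵢ`, so that `Q ≥ 0`, and every `‖w‖² / (-2 Re w)` with `w ∈ σ(A)`,
  -- so that `σ(Q)` lies in the open unit disc.
  obtain ⟨c₁, hc₁⟩ := ((A.map Complex.ofReal).finite_spectrum.image
    fun w => ‖w‖ ^ 2 / (-2 * w.re)).bddAbove
  obtain ⟨c₂, hc₂⟩ := (Set.finite_range fun i => -A i i).bddAbove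
  set s := max (max c₁ c₂) 0 + 1
  have hs : 0 < s := by positivity
  have hc₁s : c₁ < s := by grind
  have hc₂s : c₂ < s := by grind
  set Q := 1 + s⁻¹ • A
  have hQ₀ := hM.one_add_inv_smul_nonneg hs fun i => (hc₂ ⟨i, rfl⟩).trans hc₂s.le
  have hQ : Tendsto (Q ^ ·) atTop (𝓝 0) := Matrix.tendsto_pow_one_add_inv_smul hs fun w hw => by
    have := (hc₁ ⟨w, hw, rfl⟩).trans_lt hc₁s
    rwa [div_lt_iff₀ (by linarith [hH w hw]), mul_comm] at this
  have hA : A⁻¹ = -s⁻¹ • (1 - Q)⁻¹ := by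
    have hAQ : A = (-s) • (1 - Q) := by simp [Q, smul_smul, hs.ne']
    refine Matrix.inv_eq_right_inv ?_
    rw [Matrix.mul_smul, hAQ, Matrix.smul_mul, Matrix.mul_nonsing_inv _
      ((isUnit_iff_isUnit_det _).mp (isUnit_one_sub_of_tendsto_pow hQ)), smul_smul]
    simp [hs.ne']
  rw [hA, Matrix.smul_apply, smul_eq_mul, neg_mul]
  exact neg_nonpos.mpr (mul_nonneg (inv_nonneg.mpr hs.le) (Matrix.inv_one_sub_nonneg hQ₀ hQ i j))

theorem Metzler.inv_apply_self_neg [Nonempty m] {A : Matrix m m ℝ} (hM : Metzler A)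
    (hH : HurwitzStable A) (i : m) : A⁻¹ i i < 0 := by
  refine (hM.inv_nonpos hH i i).lt_of_ne fun h0 => ?_
  have h1 : (A * A⁻¹) i i = 1 := by rw [mul_nonsing_inv _ hH.isUnit_det, one_apply_eq]
  have h2 : (A * A⁻¹) i i ≤ 0 := by
    rw [mul_apply]
    refine Finset.sum_nonpos fun j _ => ?_
    rcases eq_or_ne i j with rfl | hij
    · rw [h0, mul_zero]
    · exact mul_nonpos_of_nonneg_of_nonpos (hM i j hij) (hM.inv_nonpos hH j i)
  linarith

theorem Metzler.exists_pos_mulVec_neg [Nonempty m] {A : Matrix m m ℝ} (hM : Metzler A)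
    (hH : HurwitzStable A) : ∃ v : m → ℝ, (∀ i, 0 < v i) ∧ ∀ i, (A *ᵥ v) i < 0 := by
  refine ⟨-A⁻¹ *ᵥ fun _ => 1, fun i => ?_, fun i => ?_⟩
  · calc 0 < -A⁻¹ i i := neg_pos.mpr (hM.inv_apply_self_neg hH i)
      _ ≤ ∑ j, -A⁻¹ i j * 1 := by
        simpa using Finset.single_le_sum (fun j _ => neg_nonneg.mpr (hM.inv_nonpos hH i j))
          (Finset.mem_univ i)
  · rw [mulVec_mulVec, Matrix.mul_neg, mul_nonsing_inv _ hH.isUnit_det, neg_mulVec, one_mulVec]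
    simp

theorem Metzler.sub_smul_vecMulVec_single {A : Matrix m m ℝ} (hA : Metzler A) (k : m) (u : ℝ) :
    Metzler (A - u • vecMulVec (Pi.single k 1) (Pi.single k 1)) := by
  intro i j hij
  have h : (Pi.single k 1 : m → ℝ) i * (Pi.single k 1 : m → ℝ) j = 0 := by
    rcases eq_or_ne i k with rfl | hik
    · rw [Pi.single_eq_of_ne (Ne.symm hij), mul_zero]
    · rw [Pi.single_eq_of_ne hik, zero_mul]
  simpa [vecMulVec_apply, h] using hA i j hij

theorem mulVec_sub_smul_vecMulVec_single_le (A : Matrix m m ℝ) (k : m) {u : ℝ} (hu : 0 ≤ u)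
    {v : m → ℝ} (hv : 0 ≤ v k) (i : m) :
    ((A - u • vecMulVec (Pi.single k 1) (Pi.single k 1)) *ᵥ v) i ≤ (A *ᵥ v) i := by
  have h : 0 ≤ (Pi.single k 1 : m → ℝ) i := by
    rw [Pi.single_apply]; split_ifs <;> norm_num
  simpa [sub_mulVec, smul_mulVec, vecMulVec_mulVec] using mul_nonneg hu (mul_nonneg hv h)

end

section

variable {m : Type*} [Fintype m]

theorem Metzler.eq_zero_of_re_conj_mul_mulVec_nonneg {M : Matrix m m ℝ} (hM : Metzler M)
    {v : m → ℝ} (hv : ∀ i, 0 < v i) (hMv : ∀ i, (M *ᵥ v) i < 0) {x : m → ℂ}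
    (hx : ∀ i, 0 ≤ (conj (x i) * (M.map Complex.ofReal *ᵥ x) i).re) : x = 0 := by
  by_contra hx₀
  obtain ⟨j₀, hj₀⟩ := Function.ne_iff.mp hx₀
  obtain ⟨i, -, hi⟩ :=
    Finset.exists_max_image Finset.univ (fun j => ‖x j‖ / v j) ⟨j₀, Finset.mem_univ _⟩
  set t := ‖x i‖ / v i
  have ht : 0 < t :=
    (div_pos (norm_pos_iff.mpr hj₀) (hv j₀)).trans_le (hi j₀ (Finset.mem_univ _))
  have hxi : ‖x i‖ = t * v i := (div_mul_cancel₀ _ (hv i).ne').symm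
  have hxj : ∀ j, ‖x j‖ ≤ t * v j := fun j =>
    (div_le_iff₀ (hv j)).mp (hi j (Finset.mem_univ _))
  refine (hx i).not_gt ?_
  calc (conj (x i) * (M.map Complex.ofReal *ᵥ x) i).re
      = ∑ j, M i j * (conj (x i) * x j).re := by
        simp [mulVec, dotProduct, Finset.mul_sum, Complex.re_sum, mul_left_comm]
    _ ≤ ∑ j, M i j * (t * v i * (t * v j)) := Finset.sum_le_sum fun j _ => by
        rcases eq_or_ne i j with rfl | hij
        · rw [Complex.conj_mul', ← hxi, ← Complex.ofReal_pow, Complex.ofReal_re, sq]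
        · refine mul_le_mul_of_nonneg_left ?_ (hM i j hij)
          calc (conj (x i) * x j).re ≤ ‖x i‖ * ‖x j‖ := by
                simpa using Complex.re_le_norm (conj (x i) * x j)
            _ ≤ t * v i * (t * v j) := by
                rw [hxi]; exact mul_le_mul_of_nonneg_left (hxj j) (mul_pos ht (hv i)).le
    _ = t * t * v i * (M *ᵥ v) i := by
        simp only [mulVec, dotProduct, Finset.mul_sum]
        exact Finset.sum_congr rfl fun j _ => by ring
    _ < 0 := mul_neg_of_pos_of_neg (by have := hv i; positivity) (hMv i)

end

section

variable {m : Type*} [Fintype m] [DecidableEq m]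

-- `[[M, 0, -a eₖ], [0, -b, -c], [eₖᵀ, -b, -c]]`; the closed-loop Jacobian has `M = Ā`, `eₖ = eₙ`,
-- `a = k_p r`, `b = η u*` and `c = μ k_p / u*`.
def antitheticJacobian (M : Matrix m m ℝ) (k : m) (a b c : ℝ) :
    Matrix (m ⊕ Fin 2) (m ⊕ Fin 2) ℝ :=
  fromBlocks M
    (of fun i j => if j = 1 then -a * (Pi.single k 1 : m → ℝ) i else 0)
    (of fun i j => if i = 1 then (Pi.single k 1 : m → ℝ) j else 0)
    !![-b, -c; -b, -c]

theorem antitheticJacobian_map_mulVec_inl (M : Matrix m m ℝ) (k : m) (a b c : ℝ) (x : m → ℂ)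
    (ζ : Fin 2 → ℂ) (i : m) :
    ((antitheticJacobian M k a b c).map Complex.ofReal *ᵥ Sum.elim x ζ) (Sum.inl i)
      = (M.map Complex.ofReal *ᵥ x) i - a * (Pi.single k 1 : m → ℂ) i * ζ 1 := by
  simp [antitheticJacobian, mulVec, dotProduct, Pi.single_apply, apply_ite Complex.ofReal,
    sub_eq_add_neg, neg_ite]

theorem antitheticJacobian_map_mulVec_inr_zero (M : Matrix m m ℝ) (k : m) (a b c : ℝ)
    (x : m → ℂ) (ζ : Fin 2 → ℂ) :
    ((antitheticJacobian M k a b c).map Complex.ofReal *ᵥ Sum.elim x ζ) (Sum.inr 0)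
      = -b * ζ 0 - c * ζ 1 := by
  simp [antitheticJacobian, mulVec, dotProduct, sub_eq_add_neg]

theorem antitheticJacobian_map_mulVec_inr_one (M : Matrix m m ℝ) (k : m) (a b c : ℝ)
    (x : m → ℂ) (ζ : Fin 2 → ℂ) :
    ((antitheticJacobian M k a b c).map Complex.ofReal *ᵥ Sum.elim x ζ) (Sum.inr 1)
      = x k - b * ζ 0 - c * ζ 1 := by
  simp [antitheticJacobian, mulVec, dotProduct, Pi.single_apply, apply_ite Complex.ofReal,
    sub_eq_add_neg, add_assoc]

theorem antitheticJacobian_hurwitzStable {M : Matrix m m ℝ} (hM : Metzler M) {v : m → ℝ}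
    (hv : ∀ i, 0 < v i) (hMv : ∀ i, (M *ᵥ v) i < 0) (k : m) {a b c : ℝ} (ha : 0 < a)
    (hb : 0 < b) (hc : 0 < c) : HurwitzStable (antitheticJacobian M k a b c) := by
  intro z hz
  by_contra! hz₀
  obtain ⟨W, hW₀, hW⟩ := exists_mulVec_eq_smul_of_mem_spectrum hz
  set x := W ∘ Sum.inl
  set ζ := W ∘ Sum.inr
  have hWxζ : W = Sum.elim x ζ := (Sum.elim_comp_inl_inr W).symm
  rw [hWxζ] at hW
  have hx : ∀ i,
      (M.map Complex.ofReal *ᵥ x) i - a * (Pi.single k 1 : m → ℂ) i * ζ 1 = z * x i := fun i => by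
    rw [← antitheticJacobian_map_mulVec_inl M k a b c x ζ, hW]; rfl
  have hζ₀ : -b * ζ 0 - c * ζ 1 = z * ζ 0 := by
    rw [← antitheticJacobian_map_mulVec_inr_zero M k a b c x ζ, hW]; rfl
  have hζ₁ : x k - b * ζ 0 - c * ζ 1 = z * ζ 1 := by
    rw [← antitheticJacobian_map_mulVec_inr_one M k a b c x ζ, hW]; rfl
  have hxk := re_conj_mul_nonneg_of_antithetic_rows hz₀ hb.le hc hζ₀ hζ₁
  have hx₀ : x = 0 := hM.eq_zero_of_re_conj_mul_mulVec_nonneg hv hMv fun i => by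
    have hMx : (M.map Complex.ofReal *ᵥ x) i
        = z * x i + a * (Pi.single k 1 : m → ℂ) i * ζ 1 := by
      linear_combination hx i
    rw [hMx, mul_add, ← mul_assoc, mul_comm _ z, mul_assoc, ← Complex.normSq_eq_conj_mul_self,
      Complex.add_re, Complex.re_mul_ofReal]
    have hre := mul_nonneg hz₀ (Complex.normSq_nonneg (x i))
    rcases eq_or_ne i k with rfl | hik
    · rw [Pi.single_eq_same, mul_one, mul_left_comm, Complex.re_ofReal_mul]
      exact add_nonneg hre (mul_nonneg ha.le hxk)
    · rw [Pi.single_eq_of_ne hik, mul_zero, zero_mul, mul_zero, Complex.zero_re, add_zero]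
      exact hre
  have hζ1 : ζ 1 = 0 := by simpa [hx₀, ha.ne'] using hx k
  have hζ0 : ζ 0 = 0 := by simpa [hx₀, hζ1, hb.ne'] using hζ₁
  apply hW₀
  rw [hWxζ, hx₀]
  ext (i | j)
  · rfl
  · fin_cases j
    exacts [hζ0, hζ1]

end

theorem stmt12_general (n : ℕ) (A : Matrix (Fin (n+1)) (Fin (n+1)) ℝ)
    (hMetz : Metzler A) (hHur : HurwitzStable A)
    (μ θ r g₀ gn u : ℝ) (hμ : 0 < μ) (hθ : 0 < θ) (hr : r = μ / θ)
    (hgn : gn = -(A⁻¹ (Fin.last n) (Fin.last n)))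
    (hadm : r < g₀) (hu : u = (g₀ - r) / (gn * r)) :
    ∀ η kp : ℝ, 0 < η → 0 < kp →
      HurwitzStable (Matrix.fromBlocks
        (A - u • Matrix.vecMulVec (Pi.single (Fin.last n) 1) (Pi.single (Fin.last n) 1))
        (Matrix.of fun (i : Fin (n+1)) (j : Fin 2) =>
          if j = 1 then -(kp * r) * (Pi.single (Fin.last n) 1 : Fin (n+1) → ℝ) i else 0)
        (Matrix.of fun (i : Fin 2) (j : Fin (n+1)) =>
          if i = 1 then (Pi.single (Fin.last n) 1 : Fin (n+1) → ℝ) j else 0)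
        !![-(η * u), -(μ * kp / u); -(η * u), -(μ * kp / u)]) := by
  intro η kp hη hkp
  have hr₀ : 0 < r := hr ▸ div_pos hμ hθ
  have hgn₀ : 0 < gn := hgn ▸ neg_pos.mpr (hMetz.inv_apply_self_neg hHur _)
  have hu₀ : 0 < u := hu ▸ div_pos (sub_pos.mpr hadm) (mul_pos hgn₀ hr₀)
  obtain ⟨v, hv, hAv⟩ := hMetz.exists_pos_mulVec_neg hHur
  exact antitheticJacobian_hurwitzStable (hMetz.sub_smul_vecMulVec_single (Fin.last n) u) hv
    (fun i => (mulVec_sub_smul_vecMulVec_single_le A _ hu₀.le (hv _).le i).trans_lt (hAv i))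
    (Fin.last n) (mul_pos hkp hr₀) (mul_pos hη hu₀) (by positivity)

/-- Theorem 3 of the paper (structural stability, stable open-loop case): for a Metzler
Hurwitz stable matrix A and an admissible set-point r < g₀, the closed-loop Jacobian of the
p-type AIC is Hurwitz stable for all controller parameters η, k_p > 0. -/
theorem stmt12 (n : ℕ) (A : Matrix (Fin (n+1)) (Fin (n+1)) ℝ)
    (hMetz : Metzler A) (hHur : HurwitzStable A)
    (b₀ : Fin (n+1) → ℝ) (hb₀ : ∀ i, 0 ≤ b₀ i)
    (μ θ r g₀ gn u : ℝ) (hμ : 0 < μ) (hθ : 0 < θ) (hr : r = μ / θ)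
    (hg₀ : g₀ = -((A⁻¹ *ᵥ b₀) (Fin.last n)))
    (hgn : gn = -(A⁻¹ (Fin.last n) (Fin.last n)))
    (hadm : r < g₀) (hu : u = (g₀ - r) / (gn * r)) :
    ∀ η kp : ℝ, 0 < η → 0 < kp →
      HurwitzStable (Matrix.fromBlocks
        (A - u • Matrix.vecMulVec (Pi.single (Fin.last n) 1) (Pi.single (Fin.last n) 1))
        (Matrix.of fun (i : Fin (n+1)) (j : Fin 2) =>
          if j = 1 then -(kp * r) * (Pi.single (Fin.last n) 1 : Fin (n+1) → ℝ) i else 0)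
        (Matrix.of fun (i : Fin 2) (j : Fin (n+1)) =>
          if i = 1 then (Pi.single (Fin.last n) 1 : Fin (n+1) → ℝ) j else 0)
        !![-(η * u), -(μ * kp / u); -(η * u), -(μ * kp / u)]) :=
  stmt12_general n A hMetz hHur μ θ r g₀ gn u hμ hθ hr hgn hadm hu
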